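/- arXiv:2008.03159 — 7 statements merged into one kernel-verified Lean document; each statement's English description precedes it below -/
import Mathlib

section
/- If α, β, γ are cofinite partial isometries of ℤ (with the usual metric) and α = β∘γ, then max(|ℤ∖dom β|, |ℤ∖dom γ|) ≤ |ℤ∖dom α| ≤ |ℤ∖dom β| + |ℤ∖dom γ|. -/
/-!
A cofinite partial isometry of ℤ agrees on its domain with a translation or a reflection, which
is a bijection of ℤ, so its range misses exactly as many points as its domain. The lower bounds
then follow from dom(βγ) ⊆ dom β and ran(βγ) ⊆ ran γ, and the upper bound from
ℤ∖dom(βγ) = (ℤ∖dom β) ∪ β⁻¹(ℤ∖dom γ) together with the injectivity of β.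
-/

/-- A cofinite partial isometry of ℤ with the usual metric: an injective partial map
with cofinite domain and range preserving distances on its domain. -/
def CofIso (f : ℤ →. ℤ) : Prop :=
  f.Domᶜ.Finite ∧ f.ranᶜ.Finite ∧
  (∀ ⦃x y x' y'⦄, x' ∈ f x → y' ∈ f y → x' = y' → x = y) ∧
  (∀ ⦃x y x' y'⦄, x' ∈ f x → y' ∈ f y → |x' - y'| = |x - y|)

namespace PFun

variable {α β γ : Type*}

lemma compl_dom_comp (g : β →. γ) (f : α →. β) :
    (g.comp f).Domᶜ = f.Domᶜ ∪ f.preimage g.Domᶜ := by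
  ext x
  simp only [dom_comp, Set.mem_compl_iff, Set.mem_union, mem_preimage, mem_dom]
  constructor
  · intro hx
    by_contra! hcon
    obtain ⟨y, hy⟩ := hcon.1
    refine hx ⟨y, ?_, hy⟩
    by_contra! hyg
    exact hcon.2 y hyg hy
  · rintro (hx | ⟨y, hy, hxy⟩) ⟨y', hy', hxy'⟩
    · exact hx ⟨y', hxy'⟩
    · exact hy (Part.mem_unique hxy hxy' ▸ hy')

lemma ran_comp_subset (g : β →. γ) (f : α →. β) : (g.comp f).ran ⊆ g.ran := by
  rintro z ⟨x, hx⟩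
  obtain ⟨y, -, hyz⟩ := Part.mem_bind_iff.1 hx
  exact ⟨y, hyz⟩

lemma ncard_preimage_le {f : α →. β} (hf : ∀ ⦃x x' y⦄, y ∈ f x → y ∈ f x' → x = x')
    {s : Set β} (hs : s.Finite) : (f.preimage s).ncard ≤ s.ncard := by
  classical
  calc (f.preimage s).ncard ≤ (Option.some '' s).ncard := by
        refine Set.ncard_le_ncard_of_injOn (fun x => (f x).toOption) ?_ ?_ (hs.image _)
        · rintro x ⟨y, hy, hxy⟩
          exact ⟨y, hy, (Part.mem_toOption.2 hxy).symm⟩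
        · rintro x ⟨y, -, hxy⟩ x' ⟨y', -, hxy'⟩ h
          simp only [Part.toOption_eq_some_iff.2 hxy, Part.toOption_eq_some_iff.2 hxy',
            Option.some.injEq] at h
          exact hf hxy (h ▸ hxy')
    _ = s.ncard := Set.ncard_image_of_injective _ (Option.some_injective β)

lemma ran_eq_image_dom {f : α →. β} {g : α → β} (hg : ∀ ⦃x y⦄, y ∈ f x → y = g x) :
    f.ran = g '' f.Dom := by
  ext y
  constructor
  · rintro ⟨x, hx⟩
    exact ⟨x, (f.mem_dom x).2 ⟨y, hx⟩, (hg hx).symm⟩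
  · rintro ⟨x, hx, rfl⟩
    obtain ⟨y', hy'⟩ := (f.mem_dom x).1 hx
    exact ⟨x, hg hy' ▸ hy'⟩

lemma ncard_compl_ran_eq {f : α →. β} (g : α ≃ β) (hg : ∀ ⦃x y⦄, y ∈ f x → y = g x) :
    f.ranᶜ.ncard = f.Domᶜ.ncard := by
  rw [ran_eq_image_dom hg, ← g.image_compl, Set.ncard_image_of_injective _ g.injective]

end PFun

lemma exists_equiv_extending_of_abs_sub_eq {f : ℤ →. ℤ}
    (hf : ∀ ⦃x y x' y'⦄, x' ∈ f x → y' ∈ f y → |x' - y'| = |x - y|) {a : ℤ}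
    (ha : a ∈ f.Dom) (ha' : a + 1 ∈ f.Dom) : ∃ g : ℤ ≃ ℤ, ∀ ⦃x y⦄, y ∈ f x → y = g x := by
  obtain ⟨u, hu⟩ := (f.mem_dom a).1 ha
  obtain ⟨v, hv⟩ := (f.mem_dom _).1 ha'
  have huv := hf hu hv
  rw [abs_eq_abs] at huv
  have hdist : ∀ ⦃x y⦄, y ∈ f x → (y - u = x - a ∨ y - u = -(x - a)) ∧
      (y - v = x - (a + 1) ∨ y - v = -(x - (a + 1))) := fun x y hy =>
    ⟨abs_eq_abs.1 (hf hy hu), abs_eq_abs.1 (hf hy hv)⟩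
  by_cases hv' : v = u + 1
  · refine ⟨Equiv.addRight (u - a), fun x y hy => ?_⟩
    have := hdist hy
    simp only [Equiv.coe_addRight]
    omega
  · refine ⟨(Equiv.neg ℤ).trans (Equiv.addRight (u + a)), fun x y hy => ?_⟩
    have := hdist hy
    simp only [Equiv.trans_apply, Equiv.neg_apply, Equiv.coe_addRight]
    omega

namespace CofIso

variable {f : ℤ →. ℤ}

lemma injective (hf : CofIso f) : ∀ ⦃x x' y⦄, y ∈ f x → y ∈ f x' → x = x' :=
  fun _ _ _ hx hx' => hf.2.2.1 hx hx' rfl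

lemma exists_equiv_extending (hf : CofIso f) :
    ∃ g : ℤ ≃ ℤ, ∀ ⦃x y⦄, y ∈ f x → y = g x := by
  obtain ⟨N, hN⟩ := hf.1.bddAbove
  have hdom : ∀ x, N < x → x ∈ f.Dom := fun x hx => by
    by_contra h
    exact absurd (hN h) (not_le.2 hx)
  exact exists_equiv_extending_of_abs_sub_eq hf.2.2.2 (hdom (N + 1) (by omega))
    (hdom (N + 1 + 1) (by omega))

lemma ncard_compl_ran (hf : CofIso f) : f.ranᶜ.ncard = f.Domᶜ.ncard := by
  obtain ⟨g, hg⟩ := hf.exists_equiv_extending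
  exact PFun.ncard_compl_ran_eq g hg

end CofIso

-- `γ.comp β` applies β first: the product βγ of the paper is written with right actions.
/-- If α = βγ (apply β first, then γ) in the monoid of cofinite partial isometries of ℤ,
then max(|ℤ∖dom β|, |ℤ∖dom γ|) ≤ |ℤ∖dom α| ≤ |ℤ∖dom β| + |ℤ∖dom γ|. -/
theorem stmt_0 (α β γ : ℤ →. ℤ) (hα : CofIso α) (hβ : CofIso β) (hγ : CofIso γ)
    (h : α = γ.comp β) :
    max β.Domᶜ.ncard γ.Domᶜ.ncard ≤ α.Domᶜ.ncard ∧
      α.Domᶜ.ncard ≤ β.Domᶜ.ncard + γ.Domᶜ.ncard := by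
  subst h
  have hcomp := PFun.compl_dom_comp γ β
  refine ⟨max_le ?_ ?_, ?_⟩
  · exact Set.ncard_le_ncard (hcomp ▸ Set.subset_union_left) hα.1
  · rw [← hγ.ncard_compl_ran, ← hα.ncard_compl_ran]
    exact Set.ncard_le_ncard (Set.compl_subset_compl.2 (PFun.ran_comp_subset γ β)) hα.2.1
  · calc (γ.comp β).Domᶜ.ncard ≤ β.Domᶜ.ncard + (β.preimage γ.Domᶜ).ncard :=
          hcomp ▸ Set.ncard_union_le _ _
      _ ≤ β.Domᶜ.ncard + γ.Domᶜ.ncard :=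
          Nat.add_le_add_left (PFun.ncard_preimage_le hβ.injective hγ.1) _
end

section
/- There is no injective monoid (or even semigroup) homomorphism from the monoid IN∞ of all cofinite partial isometries of ℕ into the monoid ID∞ of all cofinite partial isometries of ℤ. -/
/-- A cofinite partial isometry of ℕ with the usual metric. -/
def CofIsoN (f : ℕ →. ℕ) : Prop :=
  f.Domᶜ.Finite ∧ f.ranᶜ.Finite ∧
  (∀ ⦃x y x' y'⦄, x' ∈ f x → y' ∈ f y → x' = y' → x = y) ∧
  (∀ ⦃x y x' y'⦄, x' ∈ f x → y' ∈ f y → |(x' : ℤ) - (y' : ℤ)| = |(x : ℤ) - (y : ℤ)|)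

namespace PFun

variable {α : Type*}

theorem mem_comp_iff {β γ : Type*} {f : β →. γ} {g : α →. β} {a : α} {c : γ} :
    c ∈ f.comp g a ↔ ∃ b ∈ g a, c ∈ f b :=
  Part.mem_bind_iff

def IsPartialId (p : α →. α) : Prop := ∀ ⦃x y⦄, y ∈ p x → y = x

theorem IsPartialId.comp_self {p : α →. α} (hp : p.IsPartialId) : p.comp p = p := by
  ext x y
  rw [mem_comp_iff]
  constructor
  · rintro ⟨z, hz, hy⟩
    rwa [hp hz] at hy
  · intro hy
    refine ⟨y, hy, ?_⟩
    obtain rfl := hp hy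
    exact hy

theorem IsPartialId.mem_of_comp_eq {p f : α →. α} (hp : p.IsPartialId) (h : p.comp f = f)
    {x y : α} (hy : y ∈ f x) : y ∈ p y := by
  rw [← h, mem_comp_iff] at hy
  obtain ⟨z, -, hz⟩ := hy
  obtain rfl := hp hz
  exact hz

theorem IsPartialId.eq_id_of_comp_eq {p f : α →. α} (hp : p.IsPartialId) (h : p.comp f = f)
    (hf : ∀ y, ∃ x, y ∈ f x) : p = PFun.id α := by
  ext x y
  rw [id_apply, Part.mem_some_iff]
  refine ⟨fun hy => hp hy, ?_⟩
  rintro rfl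
  obtain ⟨z, hz⟩ := hf y
  exact hp.mem_of_comp_eq h hz

theorem isPartialId_of_comp_self {f : α →. α}
    (hinj : ∀ ⦃x y x' y'⦄, x' ∈ f x → y' ∈ f y → x' = y' → x = y) (hf : f.comp f = f) :
    f.IsPartialId := by
  intro x y hy
  have hyy : y ∈ f.comp f x := by rwa [hf]
  obtain ⟨z, hz, hyz⟩ := mem_comp_iff.mp hyy
  rw [Part.mem_unique hz hy] at hyz
  exact hinj hyz hy rfl

theorem dom_subset_of_comp_eq {β γ : Type*} {f : β →. γ} {g : α →. β} {h : α →. γ}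
    (hfg : f.comp g = h) : h.Dom ⊆ g.Dom := by
  rw [← hfg, dom_comp]
  exact preimage_subset_dom _ _

end PFun

open PFun

-- A point of `ℤ` is determined by its distances to two distinct points.
theorem exists_affine_of_isometry {f : ℤ →. ℤ} (hdom : f.Dom.Nontrivial)
    (hiso : ∀ ⦃x y x' y'⦄, x' ∈ f x → y' ∈ f y → |x' - y'| = |x - y|) :
    ∃ s c : ℤ, (s = 1 ∨ s = -1) ∧ ∀ ⦃x y⦄, y ∈ f x → y = s * x + c := by
  obtain ⟨a, ha, b, hb, hab⟩ := hdom
  obtain ⟨fa, ha⟩ := (mem_dom f a).mp ha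
  obtain ⟨fb, hb⟩ := (mem_dom f b).mp hb
  rcases abs_eq_abs.mp (hiso ha hb) with h | h
  · refine ⟨1, fa - a, .inl rfl, fun x y hy => ?_⟩
    rcases abs_eq_abs.mp (hiso hy ha) with h₁ | h₁ <;>
      rcases abs_eq_abs.mp (hiso hy hb) with h₂ | h₂ <;> omega
  · refine ⟨-1, fa + a, .inr rfl, fun x y hy => ?_⟩
    rcases abs_eq_abs.mp (hiso hy ha) with h₁ | h₁ <;>
      rcases abs_eq_abs.mp (hiso hy hb) with h₂ | h₂ <;> omega

theorem CofIso.exists_affine {f : ℤ →. ℤ} (hf : CofIso f) :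
    ∃ s c : ℤ, (s = 1 ∨ s = -1) ∧ ∀ ⦃x y⦄, y ∈ f x → y = s * x + c := by
  have hdom : f.Dom.Infinite := by simpa using hf.1.infinite_compl
  exact exists_affine_of_isometry hdom.nontrivial hf.2.2.2

theorem isPartialId_comp_self_of_affine {u : ℤ →. ℤ} {s c : ℤ}
    (hu : ∀ ⦃x y⦄, y ∈ u x → y = s * x + c) (hs : s = 1 ∨ s = -1) (htrans : ¬(s = 1 ∧ c ≠ 0)) :
    (u.comp u).IsPartialId := by
  intro x y hy
  obtain ⟨z, hz, hyz⟩ := mem_comp_iff.mp hy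
  rw [hu hyz, hu hz]
  rcases hs with rfl | rfl
  · simp only [ne_eq, true_and, not_not] at htrans
    omega
  · ring

theorem Set.eq_univ_of_finite_compl_of_add_mem {S : Set ℤ} (hS : Sᶜ.Finite) {c : ℤ}
    (hc : c ≠ 0) (hadd : ∀ x ∈ S, x + c ∈ S) : S = Set.univ := by
  refine Set.eq_univ_of_forall fun x => by_contra fun hx => ?_
  have hmem : ∀ n : ℕ, x - n * c ∈ Sᶜ := by
    intro n
    induction n with
    | zero => simpa using hx
    | succ n ih =>
      intro h
      apply ih
      have hstep : x - ((n + 1 : ℕ) : ℤ) * c + c = x - n * c := by push_cast; ring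
      exact hstep ▸ hadd _ h
  have hinj : Function.Injective fun n : ℕ => x - n * c := fun m n h =>
    by exact_mod_cast mul_right_cancel₀ hc (by simpa using h : (m : ℤ) * c = n * c)
  exact Set.infinite_of_injective_forall_mem hinj hmem hS

theorem forall_add_mem_of_translation {u E : ℤ →. ℤ} {c : ℤ} (hc : c ≠ 0)
    (hu : ∀ ⦃x y⦄, y ∈ u x → y = x + c) (hE : E.IsPartialId) (hEcof : E.Domᶜ.Finite)
    (hdom : E.Dom ⊆ u.Dom) (hEu : E.comp u = u) (x : ℤ) : x + c ∈ u x := by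
  have hshift : ∀ x ∈ E.Dom, x + c ∈ u x := fun x hx => by
    obtain ⟨y, hy⟩ := (mem_dom u x).mp (hdom hx)
    rwa [← hu hy]
  have hEdom : E.Dom = Set.univ := Set.eq_univ_of_finite_compl_of_add_mem hEcof hc
    fun x hx => (mem_dom E _).mpr ⟨_, hE.mem_of_comp_eq hEu (hshift x hx)⟩
  exact hshift x (hEdom ▸ Set.mem_univ x)

-- The translation `n ↦ n + d` restricted to `n ≥ a`; `toNat` truncates nothing when
-- `0 ≤ a + d`. The shift `σ` is `natTranslate 0 1`, its partial inverse `σ*` is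
-- `natTranslate 1 (-1)`, and `σ σ*` is `natTranslate 1 0`.
def natTranslate (a : ℕ) (d : ℤ) : ℕ →. ℕ :=
  PFun.res (fun n => ((n : ℤ) + d).toNat) {n | a ≤ n}

theorem mem_natTranslate {a : ℕ} {d : ℤ} {x y : ℕ} :
    y ∈ natTranslate a d x ↔ a ≤ x ∧ ((x : ℤ) + d).toNat = y :=
  mem_res _ _ _ _

theorem cofIsoN_natTranslate {a : ℕ} {d : ℤ} (h : 0 ≤ (a : ℤ) + d) :
    CofIsoN (natTranslate a d) := by
  simp only [CofIsoN, mem_natTranslate]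
  refine ⟨(Set.finite_Iio a).subset fun x hx => ?_, (Set.finite_Iio (a + d).toNat).subset
    fun y hy => ?_, fun x y x' y' hx hy h => by omega, fun x y x' y' hx hy => ?_⟩
  · by_contra hlt
    exact hx ((mem_dom _ x).mpr ⟨_, mem_natTranslate.mpr ⟨not_lt.mp hlt, rfl⟩⟩)
  · by_contra hlt
    rw [Set.mem_Iio, not_lt] at hlt
    exact hy ⟨((y : ℤ) - d).toNat, mem_natTranslate.mpr (by omega)⟩
  · rw [← hx.2, ← hy.2]
    congr 1
    omega

theorem natTranslate_comp {a b : ℕ} {d e f : ℤ} (hb : b ≤ a + d) (hf : d + e = f) :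
    (natTranslate b e).comp (natTranslate a d) = natTranslate a f := by
  ext x y
  simp only [mem_comp_iff, mem_natTranslate]
  constructor
  · rintro ⟨z, ⟨hx, rfl⟩, -, rfl⟩
    omega
  · rintro ⟨hx, rfl⟩
    exact ⟨_, ⟨hx, rfl⟩, by omega, by omega⟩

theorem natTranslate_inj {a a' : ℕ} {d d' : ℤ} (hd : 0 ≤ (a : ℤ) + d) (hd' : 0 ≤ (a' : ℤ) + d') :
    natTranslate a d = natTranslate a' d' ↔ a = a' ∧ d = d' := by
  refine ⟨fun h => ?_, by rintro ⟨rfl, rfl⟩; rfl⟩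
  have h₁ : ((a : ℤ) + d).toNat ∈ natTranslate a' d' a := h ▸ mem_natTranslate.mpr ⟨le_rfl, rfl⟩
  have h₂ : ((a' : ℤ) + d').toNat ∈ natTranslate a d a' := h ▸ mem_natTranslate.mpr ⟨le_rfl, rfl⟩
  rw [mem_natTranslate] at h₁ h₂
  omega

structure IsCofIsoEmbedding (φ : (ℕ →. ℕ) → (ℤ →. ℤ)) : Prop where
  mapsTo : ∀ f, CofIsoN f → CofIso (φ f)
  injOn : Set.InjOn φ {f | CofIsoN f}
  map_comp : ∀ f g, CofIsoN f → CofIsoN g → φ (g.comp f) = (φ g).comp (φ f)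

namespace IsCofIsoEmbedding

variable {φ : (ℕ →. ℕ) → (ℤ →. ℤ)}

theorem map_natTranslate_comp (hφ : IsCofIsoEmbedding φ) {a b : ℕ} {d e f : ℤ}
    (hb : b ≤ a + d) (he : 0 ≤ (b : ℤ) + e) (hf : d + e = f) :
    φ (natTranslate a f) = (φ (natTranslate b e)).comp (φ (natTranslate a d)) := by
  rw [← natTranslate_comp hb hf,
    hφ.map_comp _ _ (cofIsoN_natTranslate (by omega)) (cofIsoN_natTranslate he)]

theorem natTranslate_eq_of_map_eq (hφ : IsCofIsoEmbedding φ) {a a' : ℕ} {d d' : ℤ}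
    (hd : 0 ≤ (a : ℤ) + d) (hd' : 0 ≤ (a' : ℤ) + d')
    (h : φ (natTranslate a d) = φ (natTranslate a' d')) : a = a' ∧ d = d' :=
  (natTranslate_inj hd hd').mp (hφ.injOn (cofIsoN_natTranslate hd) (cofIsoN_natTranslate hd') h)

theorem isPartialId_map_natTranslate_zero (hφ : IsCofIsoEmbedding φ) (a : ℕ) :
    (φ (natTranslate a 0)).IsPartialId :=
  isPartialId_of_comp_self (hφ.mapsTo _ (cofIsoN_natTranslate (by omega))).2.2.1
    (hφ.map_natTranslate_comp (by omega) (by omega) (add_zero 0)).symm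

theorem not_isPartialId_comp_self (hφ : IsCofIsoEmbedding φ) :
    ¬((φ (natTranslate 0 1)).comp (φ (natTranslate 0 1))).IsPartialId := by
  intro h
  have h₂ : φ (natTranslate 0 2) = (φ (natTranslate 0 1)).comp (φ (natTranslate 0 1)) :=
    hφ.map_natTranslate_comp (by norm_num) (by norm_num) (by norm_num)
  have h₄ : φ (natTranslate 0 4) = φ (natTranslate 0 2) := by
    rw [hφ.map_natTranslate_comp (b := 0) (d := 2) (e := 2) (by norm_num) (by norm_num)
      (by norm_num), h₂, h.comp_self]
  have := hφ.natTranslate_eq_of_map_eq (by norm_num) (by norm_num) h₄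
  norm_num at this

theorem not_translation (hφ : IsCofIsoEmbedding φ) {c : ℤ} (hc : c ≠ 0) :
    ¬∀ ⦃x y⦄, y ∈ φ (natTranslate 0 1) x → y = x + c := by
  intro hu
  have hE := hφ.isPartialId_map_natTranslate_zero 0
  have hF := hφ.isPartialId_map_natTranslate_zero 1
  have hvu : (φ (natTranslate 1 (-1))).comp (φ (natTranslate 0 1)) = φ (natTranslate 0 0) :=
    (hφ.map_natTranslate_comp (by norm_num) (by norm_num) (by norm_num)).symm
  have hEu : (φ (natTranslate 0 0)).comp (φ (natTranslate 0 1)) = φ (natTranslate 0 1) :=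
    (hφ.map_natTranslate_comp (by norm_num) (by norm_num) (by norm_num)).symm
  have hFu : (φ (natTranslate 1 0)).comp (φ (natTranslate 0 1)) = φ (natTranslate 0 1) :=
    (hφ.map_natTranslate_comp (by norm_num) (by norm_num) (by norm_num)).symm
  have htotal := forall_add_mem_of_translation hc hu hE
    (hφ.mapsTo _ (cofIsoN_natTranslate le_rfl)).1 (dom_subset_of_comp_eq hvu) hEu
  have hsurj : ∀ y, ∃ x, y ∈ φ (natTranslate 0 1) x := fun y =>
    ⟨y - c, by simpa using htotal (y - c)⟩
  have := hφ.natTranslate_eq_of_map_eq (by norm_num) (by norm_num)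
    ((hE.eq_id_of_comp_eq hEu hsurj).trans (hF.eq_id_of_comp_eq hFu hsurj).symm)
  norm_num at this

end IsCofIsoEmbedding

/-- There is no injective semigroup (hence no injective monoid) homomorphism from the
monoid IN∞ of all cofinite partial isometries of ℕ into the monoid ID∞ of all cofinite
partial isometries of ℤ (composition of partial maps, first map applied first). -/
theorem stmt_3 :
    ¬ ∃ φ : (ℕ →. ℕ) → (ℤ →. ℤ),
      (∀ f, CofIsoN f → CofIso (φ f)) ∧
      Set.InjOn φ {f | CofIsoN f} ∧
      ∀ f g, CofIsoN f → CofIsoN g → φ (g.comp f) = (φ g).comp (φ f) := by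
  rintro ⟨φ, hmapsTo, hinjOn, hmap_comp⟩
  have hφ : IsCofIsoEmbedding φ := ⟨hmapsTo, hinjOn, hmap_comp⟩
  obtain ⟨s, c, hs, hu⟩ :=
    (hmapsTo _ (cofIsoN_natTranslate (a := 0) (d := 1) (by norm_num))).exists_affine
  by_cases htrans : s = 1 ∧ c ≠ 0
  · obtain ⟨rfl, hc⟩ := htrans
    exact hφ.not_translation hc fun x y hy => by simpa using hu hy
  · exact hφ.not_isPartialId_comp_self (isPartialId_comp_self_of_affine hu hs htrans)
end

section
/- Let C be a proper cofinite subset of ℤ and let γ: C → C be a bijection that is a partial isometry of ℤ (i.e., |γ(x)−γ(y)| = |x−y| for all x,y ∈ C). Then γ is either the identity map of C or the map x ↦ 2c − x where c = (min(ℤ∖C) + max(ℤ∖C))/2, i.e., γ determines a symmetry of C. -/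
/-!
Comparing with a base point x₀, an isometry γ of C satisfies γ x - γ x₀ = ±(x - x₀) for each x,
and the sign cannot vary: points with different signs would give |a + b| = |a - b| with
a, b ≠ 0. So γ is a translation x ↦ x + t or a reflection x ↦ s - x on C. As γ permutes C,
the same map permutes the finite set ℤ∖C, whose least and greatest elements m and M then force
t = 0, resp. s = m + M.
-/

open Set

section LinearOrderedAddCommGroup

variable {α : Type*} [AddCommGroup α] [LinearOrder α] [IsOrderedAddMonoid α]

theorem abs_add_eq_abs_sub_iff {a b : α} : |a + b| = |a - b| ↔ a = 0 ∨ b = 0 := by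
  refine ⟨fun h => ?_, ?_⟩
  · rcases abs_eq_abs.1 h with h | h
    · exact .inr (two_nsmul_eq_zero.1 (by rw [two_nsmul]; grind))
    · exact .inl (two_nsmul_eq_zero.1 (by rw [two_nsmul]; grind))
  · rintro (rfl | rfl) <;> simp

theorem exists_eqOn_add_or_sub_of_abs_sub_eq {S : Set α} {f : α → α}
    (hf : ∀ x ∈ S, ∀ y ∈ S, |f x - f y| = |x - y|) :
    (∃ t, EqOn f (· + t) S) ∨ (∃ s, EqOn f (s - ·) S) := by
  rcases S.eq_empty_or_nonempty with rfl | ⟨x₀, hx₀⟩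
  · exact .inl ⟨0, eqOn_empty _ _⟩
  have hsign (x) (hx : x ∈ S) : f x - f x₀ = x - x₀ ∨ f x - f x₀ = -(x - x₀) :=
    abs_eq_abs.1 (hf x hx x₀ hx₀)
  by_cases htrans : ∀ x ∈ S, f x - f x₀ = x - x₀
  · exact .inl ⟨f x₀ - x₀, fun x hx => by have := htrans x hx; grind⟩
  push Not at htrans
  obtain ⟨z, hz, hz_ne⟩ := htrans
  have hz_refl : f z - f x₀ = -(z - x₀) := (hsign z hz).resolve_left hz_ne
  refine .inr ⟨f x₀ + x₀, fun x hx => ?_⟩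
  rcases hsign x hx with hx_trans | hx_refl
  · have : x - x₀ = 0 ∨ z - x₀ = 0 := abs_add_eq_abs_sub_iff.1 <| by
      convert hf x hx z hz using 2 <;> grind
    grind
  · grind

theorem eq_zero_of_mapsTo_add_right {S : Set α} {m M t : α} (hm : IsLeast S m)
    (hM : IsGreatest S M) (h : MapsTo (· + t) S S) : t = 0 :=
  le_antisymm (by simpa using hM.2 (h hM.1)) (by simpa using hm.2 (h hm.1))

theorem eq_add_of_mapsTo_sub_left {S : Set α} {m M s : α} (hm : IsLeast S m)
    (hM : IsGreatest S M) (h : MapsTo (s - ·) S S) : s = m + M := by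
  have : s - m ≤ M := hM.2 (h hm.1)
  have : m ≤ s - M := hm.2 (h hM.1)
  grind

end LinearOrderedAddCommGroup

/-- Let C be a proper cofinite subset of ℤ and γ : C → C a bijection of C which is a
partial isometry of ℤ. Then, with m and M the least and greatest elements of ℤ∖C
(so that c = (m+M)/2 is the centre), γ is either the identity map of C or the
symmetry x ↦ 2c − x = m + M − x of C. -/
theorem stmt_8 (C : Set ℤ) (hfin : Cᶜ.Finite) (hproper : C ≠ Set.univ)
    (γ : ℤ → ℤ) (hbij : Set.BijOn γ C C)
    (hiso : ∀ x ∈ C, ∀ y ∈ C, |γ x - γ y| = |x - y|) :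
    ∃ m M : ℤ, IsLeast Cᶜ m ∧ IsGreatest Cᶜ M ∧
      ((∀ x ∈ C, γ x = x) ∨ (∀ x ∈ C, γ x = m + M - x)) := by
  obtain ⟨m, hm⟩ := hfin.isCompact.exists_isLeast (nonempty_compl.2 hproper)
  obtain ⟨M, hM⟩ := hfin.isCompact.exists_isGreatest (nonempty_compl.2 hproper)
  refine ⟨m, M, hm, hM, ?_⟩
  rcases exists_eqOn_add_or_sub_of_abs_sub_eq hiso with ⟨t, ht⟩ | ⟨s, hs⟩
  · obtain rfl := eq_zero_of_mapsTo_add_right hm hM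
      ((hbij.congr ht).compl (Equiv.addRight t).bijective).mapsTo
    exact .inl fun x hx => by simpa using ht hx
  · obtain rfl := eq_add_of_mapsTo_sub_left hm hM
      ((hbij.congr hs).compl (Equiv.subLeft s).bijective).mapsTo
    exact .inr hs
end

section
/- Let γ be an element of the bicyclic submonoid C_ℕ of IN∞ (i.e., a partial shift with domain of the form [m,∞)∩ℕ) and δ ∈ IN∞. Then n_{γδ}^d − n̲_{γδ}^d ≤ n_δ^d − n̲_δ^d, where for η ∈ IN∞, n̲_η^d = min(dom η) and n_η^d = min{n : [n,∞)∩ℕ ⊆ dom η}. -/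
/-- n̲_η^d : the smallest element of the domain of η. -/
noncomputable def lowd (f : ℕ →. ℕ) : ℕ := sInf f.Dom

/-- n_η^d : the smallest n such that every m ≥ n lies in the domain of η. -/
noncomputable def topd (f : ℕ →. ℕ) : ℕ := sInf {n | ∀ m, n ≤ m → m ∈ f.Dom}

open Set

lemma PFun.exists_add_of_isometry_of_dom_eq_Ici {f : ℕ →. ℕ} {m : ℕ} (hdom : f.Dom = Ici m)
    (hiso : ∀ ⦃x y x' y'⦄, x' ∈ f x → y' ∈ f y → |(x' : ℤ) - (y' : ℤ)| = |(x : ℤ) - (y : ℤ)|) :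
    ∃ k : ℤ, ∀ ⦃x y⦄, y ∈ f x → (y : ℤ) = x + k := by
  have mem_dom : ∀ x, m ≤ x → ∃ y, y ∈ f x := fun x hx ↦
    (f.mem_dom x).mp (hdom ▸ hx)
  obtain ⟨a, ha⟩ := mem_dom m le_rfl
  refine ⟨a - m, fun x b hb ↦ ?_⟩
  have hx : x ∈ f.Dom := (f.mem_dom x).mpr ⟨b, hb⟩
  rw [hdom, mem_Ici] at hx
  -- a point `z` so far out that the reflection `z ↦ a - (z - m)` would leave `ℕ`
  obtain ⟨c, hc⟩ := mem_dom (x + a + 1) (by omega)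
  have hba := abs_eq_abs.mp (hiso hb ha)
  have hca := abs_eq_abs.mp (hiso hc ha)
  have hcb := abs_eq_abs.mp (hiso hc hb)
  push_cast at hba hca hcb
  omega

lemma PFun.mem_dom_comp_of_translation {α : Type*} {γ : ℕ →. ℕ} {δ : ℕ →. α} {m : ℕ} {k : ℤ}
    (hdom : γ.Dom = Ici m) (hk : ∀ ⦃x y⦄, y ∈ γ x → (y : ℤ) = x + k) (x : ℕ) :
    x ∈ (δ.comp γ).Dom ↔ m ≤ x ∧ ∃ y ∈ δ.Dom, (y : ℤ) = x + k := by
  rw [PFun.dom_comp, PFun.mem_preimage]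
  constructor
  · rintro ⟨y, hy, hyx⟩
    have hx : x ∈ γ.Dom := (γ.mem_dom x).mpr ⟨y, hyx⟩
    rw [hdom] at hx
    exact ⟨hx, y, hy, hk hyx⟩
  · rintro ⟨hx, y, hy, hyx⟩
    obtain ⟨y', hy'⟩ := (γ.mem_dom x).mp (hdom ▸ hx)
    obtain rfl : y' = y := by have := hk hy'; omega
    exact ⟨y', hy, hy'⟩

lemma mem_dom_of_topd_le {f : ℕ →. ℕ} (hf : f.Domᶜ.Finite) {p : ℕ} (hp : topd f ≤ p) :
    p ∈ f.Dom := by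
  obtain ⟨N, hN⟩ := hf.bddAbove
  refine Nat.sInf_mem (s := {n | ∀ m, n ≤ m → m ∈ f.Dom}) ⟨N + 1, fun q hq ↦ ?_⟩ p hp
  by_contra hq'
  exact absurd (hN hq') (by omega)

lemma lowd_le {f : ℕ →. ℕ} {x : ℕ} (hx : x ∈ f.Dom) : lowd f ≤ x :=
  Nat.sInf_le hx

lemma topd_le_lowd_add {f : ℕ →. ℕ} {c : ℕ}
    (h : ∀ x ∈ f.Dom, ∀ p, x + c ≤ p → p ∈ f.Dom) : topd f ≤ lowd f + c := by
  rcases f.Dom.eq_empty_or_nonempty with hempty | hne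
  · have : {n | ∀ m, n ≤ m → m ∈ f.Dom} = ∅ := by
      ext n
      simpa [hempty] using ⟨n, le_rfl⟩
    rw [topd, this, Nat.sInf_empty]
    exact Nat.zero_le _
  · exact Nat.sInf_le (h _ (Nat.sInf_mem hne))

/-- If γ ∈ C_ℕ (an element of IN∞ whose domain is an interval [m,∞)) and δ ∈ IN∞, then
n_{γδ}^d − n̲_{γδ}^d ≤ n_δ^d − n̲_δ^d, where γδ is the composition applying γ first. -/
theorem stmt_13 (γ δ : ℕ →. ℕ) (hγ : CofIsoN γ) (hδ : CofIsoN δ)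
    (hC : ∃ m : ℕ, γ.Dom = {n | m ≤ n}) :
    topd (δ.comp γ) - lowd (δ.comp γ) ≤ topd δ - lowd δ := by
  obtain ⟨m, hm⟩ := hC
  obtain ⟨k, hk⟩ := PFun.exists_add_of_isometry_of_dom_eq_Ici hm hγ.2.2.2
  suffices topd (δ.comp γ) ≤ lowd (δ.comp γ) + (topd δ - lowd δ) by omega
  refine topd_le_lowd_add fun x hx p hp ↦ ?_
  obtain ⟨hxm, y, hy, hyx⟩ := (PFun.mem_dom_comp_of_translation hm hk x).mp hx
  have hy_low := lowd_le hy
  have hp_top : topd δ ≤ (p + k).toNat := by omega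
  exact (PFun.mem_dom_comp_of_translation hm hk p).mpr
    ⟨by omega, _, mem_dom_of_topd_le hδ.1 hp_top, by omega⟩
end

section
/- The monoid IN∞ of all cofinite partial isometries of ℕ is not finitely generated: no finite subset A ⊆ IN∞ satisfies ⟨A⟩ = IN∞. -/
/-- Membership in the submonoid generated by a set A of partial maps of ℕ:
finite products of elements of A (together with the identity). -/
inductive Gen (A : Set (ℕ →. ℕ)) : (ℕ →. ℕ) → Prop
  | one : Gen A (PFun.id ℕ)
  | mem {f} : f ∈ A → Gen A f
  | mul {f g} : Gen A f → Gen A g → Gen A (g.comp f)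

def IsTranslation (f : ℕ →. ℕ) : Prop :=
  ∀ ⦃x y x' y'⦄, y ∈ f x → y' ∈ f x' → (y : ℤ) - x = (y' : ℤ) - x'

def DomContainsAbove (N : ℕ) (f : ℕ →. ℕ) : Prop :=
  ∀ x ∈ f.Dom, ∀ z, x + N < z → z ∈ f.Dom

theorem isTranslation_id : IsTranslation (PFun.id ℕ) := by
  intro x y x' y' hy hy'
  rw [PFun.id_apply, Part.mem_some_iff] at hy hy'
  omega

theorem IsTranslation.comp {f g : ℕ →. ℕ} (hf : IsTranslation f) (hg : IsTranslation g) :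
    IsTranslation (g.comp f) := by
  intro x y x' y' hy hy'
  simp only [PFun.comp_apply, Part.mem_bind_iff (g := g)] at hy hy'
  obtain ⟨u, hu, hy⟩ := hy
  obtain ⟨u', hu', hy'⟩ := hy'
  have := hf hu hu'
  have := hg hy hy'
  omega

theorem CofIsoN.isTranslation {f : ℕ →. ℕ} (hf : CofIsoN f) : IsTranslation f := by
  obtain ⟨hdom, -, -, hiso⟩ := hf
  intro x y x' y' hy hy'
  obtain ⟨z, hz⟩ := (hdom.union (Set.finite_Iic (x + y + x' + y'))).infinite_compl.nonempty
  simp only [Set.mem_compl_iff, Set.mem_union, Set.not_notMem, Set.mem_Iic, not_or, not_le] at hz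
  obtain ⟨hz_dom, hz_big⟩ := hz
  obtain ⟨w, hw⟩ := (PFun.mem_dom f z).1 hz_dom
  have h := hiso hy hw
  have h' := hiso hy' hw
  rw [abs_eq_abs] at h h'
  -- `z` is so large that `y - w = z - x` would force `w < 0`
  omega

theorem Gen.isTranslation {A : Set (ℕ →. ℕ)} (hA : ∀ a ∈ A, IsTranslation a) {f : ℕ →. ℕ}
    (hf : Gen A f) : IsTranslation f := by
  induction hf with
  | one => exact isTranslation_id
  | mem ha => exact hA _ ha
  | mul _ _ ihf ihg => exact ihf.comp ihg

theorem domContainsAbove_id (N : ℕ) : DomContainsAbove N (PFun.id ℕ) :=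
  fun _ _ _ _ => trivial

theorem domContainsAbove_of_Ioi_subset {N : ℕ} {f : ℕ →. ℕ} (hf : Set.Ioi N ⊆ f.Dom) :
    DomContainsAbove N f :=
  fun _ _ z hz => hf (Set.mem_Ioi.2 (by omega))

theorem DomContainsAbove.comp {N : ℕ} {f g : ℕ →. ℕ} (hft : IsTranslation f)
    (hf : DomContainsAbove N f) (hg : DomContainsAbove N g) : DomContainsAbove N (g.comp f) := by
  intro x hx z hz
  rw [PFun.dom_comp, PFun.mem_preimage] at hx ⊢
  obtain ⟨u, hug, hu⟩ := hx
  obtain ⟨w, hw⟩ := (PFun.mem_dom f z).1 (hf x (PFun.mem_dom f x |>.2 ⟨u, hu⟩) z hz)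
  have := hft hw hu
  exact ⟨w, hg u hug w (by omega), hw⟩

theorem Gen.domContainsAbove {A : Set (ℕ →. ℕ)} {N : ℕ}
    (hA : ∀ a ∈ A, IsTranslation a ∧ Set.Ioi N ⊆ a.Dom) {f : ℕ →. ℕ} (hf : Gen A f) :
    DomContainsAbove N f := by
  induction hf with
  | one => exact domContainsAbove_id N
  | mem ha => exact domContainsAbove_of_Ioi_subset (hA _ ha).2
  | mul hf _ ihf ihg => exact ihf.comp (hf.isTranslation fun a ha => (hA a ha).1) ihg

theorem Set.Finite.exists_Ioi_subset_dom {A : Set (ℕ →. ℕ)} (hA : A.Finite)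
    (hdom : ∀ a ∈ A, a.Domᶜ.Finite) : ∃ N, ∀ a ∈ A, Set.Ioi N ⊆ a.Dom := by
  obtain ⟨N, hN⟩ := (hA.biUnion hdom).bddAbove
  refine ⟨N, fun a ha z hz => ?_⟩
  by_contra hza
  exact (Set.mem_Ioi.1 hz).not_ge (hN (Set.mem_biUnion ha hza))

theorem cofIsoN_res_id_compl_singleton (n : ℕ) : CofIsoN (PFun.res id {n}ᶜ) := by
  have hmem : ∀ x y, y ∈ PFun.res id {n}ᶜ x ↔ x ≠ n ∧ x = y := fun x y => PFun.mem_res _ _ _ _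
  have hdom : (PFun.res id {n}ᶜ).Domᶜ ⊆ {n} := fun x hx => by
    by_contra hxn
    exact hx ((PFun.mem_dom _ x).2 ⟨x, (hmem x x).2 ⟨hxn, rfl⟩⟩)
  have hran : (PFun.res id {n}ᶜ).ranᶜ ⊆ {n} := fun y hy => by
    by_contra hyn
    exact hy ⟨y, (hmem y y).2 ⟨hyn, rfl⟩⟩
  refine ⟨(Set.finite_singleton n).subset hdom, (Set.finite_singleton n).subset hran,
    fun x y x' y' hx hy hxy => ?_, fun x y x' y' hx hy => ?_⟩
  · rw [hmem] at hx hy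
    omega
  · rw [hmem] at hx hy
    rw [hx.2, hy.2]

/-- The monoid IN∞ of all cofinite partial isometries of ℕ is not finitely generated:
no finite subset A of IN∞ generates IN∞. -/
theorem stmt_15 :
    ¬ ∃ A : Set (ℕ →. ℕ), A.Finite ∧ A ⊆ {f | CofIsoN f} ∧
      ∀ f, CofIsoN f → Gen A f := by
  rintro ⟨A, hfin, hsub, hgen⟩
  obtain ⟨N, hN⟩ := hfin.exists_Ioi_subset_dom fun a ha => (hsub ha).1
  have hholed := (hgen _ (cofIsoN_res_id_compl_singleton (N + 1))).domContainsAbove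
    fun a ha => ⟨(hsub ha).isTranslation, hN a ha⟩
  have h0 : 0 ∈ (PFun.res id {N + 1}ᶜ).Dom :=
    (PFun.mem_dom _ 0).2 ⟨0, (PFun.mem_res _ _ _ _).2 ⟨by simp, rfl⟩⟩
  obtain ⟨y, hy⟩ := (PFun.mem_dom _ _).1 (hholed 0 h0 (N + 1) (by omega))
  exact ((PFun.mem_res _ _ _ _).1 hy).1 rfl
end

section
/- The set A = {α, β} ∪ {ε^{[k]} : k ≥ 2}, where α(n) = n+1 (total), β(n) = n−1 with dom β = ℕ∖{1}, and ε^{[k]} is the identity map of ℕ∖{k}, generates the monoid IN∞ of cofinite partial isometries of ℕ: every γ ∈ IN∞ is a finite product of elements of A. -/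
/-- The total shift α(n) = n+1. -/
def amap : ℕ →. ℕ := fun n => Part.some (n + 1)

/-- The partial shift β(n) = n−1 with domain ℕ minus its least element. -/
def bmap : ℕ →. ℕ := PFun.res (fun n => n - 1) {n | n ≠ 0}

/-- ε^{[k]} : the identity map of ℕ∖{k}. -/
def eps (k : ℕ) : ℕ →. ℕ := PFun.res id {n | n ≠ k}

abbrev generators : Set (ℕ →. ℕ) := {amap, bmap} ∪ {g | ∃ k : ℕ, 2 ≤ k ∧ g = eps k}

def shift (c : ℤ) : ℕ →. ℕ := fun n => ⟨0 ≤ (n : ℤ) + c, fun _ => ((n : ℤ) + c).toNat⟩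

lemma PFun.mem_comp {α β γ : Type*} {f : α →. β} {g : β →. γ} {a : α} {c : γ} :
    c ∈ g.comp f a ↔ ∃ b ∈ f a, c ∈ g b :=
  Part.mem_bind_iff

lemma mem_amap {a b : ℕ} : b ∈ amap a ↔ b = a + 1 := by
  simp [amap]

lemma mem_bmap {a b : ℕ} : b ∈ bmap a ↔ a ≠ 0 ∧ a - 1 = b := by
  simp [bmap, PFun.mem_res]

lemma mem_eps {k a b : ℕ} : b ∈ eps k a ↔ a ≠ k ∧ a = b := by
  simp [eps, PFun.mem_res]

lemma mem_shift {c : ℤ} {a b : ℕ} : b ∈ shift c a ↔ (b : ℤ) = a + c := by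
  simp only [shift, Part.mem_mk_iff, exists_prop]
  omega

lemma gen_amap : Gen generators amap := Gen.mem (Or.inl (Or.inl rfl))

lemma gen_bmap : Gen generators bmap := Gen.mem (Or.inl (Or.inr rfl))

lemma eps_eq_bmap_comp_eps_succ_comp_amap (k : ℕ) :
    eps k = bmap.comp ((eps (k + 1)).comp amap) := by
  refine PFun.ext fun a b => ?_
  simp only [PFun.mem_comp, mem_amap, mem_bmap, mem_eps]
  constructor
  · rintro ⟨hak, rfl⟩
    exact ⟨a + 1, ⟨a + 1, rfl, by omega, rfl⟩, by omega⟩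
  · rintro ⟨_, ⟨_, rfl, hne, rfl⟩, -, rfl⟩
    omega

lemma gen_eps (k : ℕ) : Gen generators (eps k) := by
  have conj : ∀ k, Gen generators (eps (k + 1)) → Gen generators (eps k) := fun k h =>
    eps_eq_bmap_comp_eps_succ_comp_amap k ▸
      Gen.mul (Gen.mul gen_amap h) gen_bmap
  have h2 : Gen generators (eps 2) := Gen.mem (Or.inr ⟨2, le_rfl, rfl⟩)
  match k with
  | 0 => exact conj 0 (conj 1 h2)
  | 1 => exact conj 1 h2
  | k + 2 => exact Gen.mem (Or.inr ⟨k + 2, by omega, rfl⟩)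

lemma gen_res_id_compl_finset (F : Finset ℕ) : Gen generators (PFun.res id (↑F)ᶜ) := by
  induction F using Finset.induction_on with
  | empty =>
    convert Gen.one using 1
    refine PFun.ext fun a b => ?_
    simp [PFun.mem_res, PFun.id, eq_comm]
  | @insert k F _ ih =>
    convert Gen.mul ih (gen_eps k) using 1
    refine PFun.ext fun a b => ?_
    simp only [PFun.mem_comp, PFun.mem_res, mem_eps, Finset.coe_insert, Set.mem_compl_iff,
      Set.mem_insert_iff, Finset.mem_coe, id_eq, not_or]
    constructor
    · rintro ⟨⟨hak, haF⟩, rfl⟩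
      exact ⟨a, ⟨haF, rfl⟩, hak, rfl⟩
    · rintro ⟨_, ⟨haF, rfl⟩, hak, rfl⟩
      exact ⟨⟨hak, haF⟩, rfl⟩

lemma gen_res_id {S : Set ℕ} (hS : Sᶜ.Finite) : Gen generators (PFun.res id S) := by
  simpa using gen_res_id_compl_finset hS.toFinset

lemma shift_zero : shift 0 = PFun.id ℕ := by
  refine PFun.ext fun a b => ?_
  simp [mem_shift, PFun.id, eq_comm]

lemma amap_comp_shift {c : ℤ} (hc : 0 ≤ c) : amap.comp (shift c) = shift (c + 1) := by
  refine PFun.ext fun a b => ?_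
  simp only [PFun.mem_comp, mem_amap, mem_shift]
  constructor
  · rintro ⟨y, hy, rfl⟩
    push_cast
    omega
  · intro hb
    exact ⟨b - 1, by omega, by omega⟩

lemma bmap_comp_shift (c : ℤ) : bmap.comp (shift c) = shift (c - 1) := by
  refine PFun.ext fun a b => ?_
  simp only [PFun.mem_comp, mem_bmap, mem_shift]
  constructor
  · rintro ⟨y, hy, hy0, rfl⟩
    omega
  · intro hb
    exact ⟨b + 1, by push_cast; omega, by omega, by omega⟩

lemma gen_shift (c : ℤ) : Gen generators (shift c) := by
  induction c using Int.induction_on with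
  | zero => exact shift_zero ▸ Gen.one
  | succ c ih =>
    exact amap_comp_shift (Int.natCast_nonneg c) ▸ Gen.mul ih gen_amap
  | pred c ih => exact bmap_comp_shift _ ▸ Gen.mul ih gen_bmap

def PreservesDist (f : ℕ →. ℕ) : Prop :=
  ∀ ⦃x y x' y'⦄, x' ∈ f x → y' ∈ f y → |(x' : ℤ) - (y' : ℤ)| = |(x : ℤ) - (y : ℤ)|

lemma PreservesDist.exists_displacement {f : ℕ →. ℕ} (hf : PreservesDist f)
    (hinf : f.Dom.Infinite) : ∃ c : ℤ, ∀ ⦃x y⦄, y ∈ f x → (y : ℤ) = x + c := by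
  have same : ∀ ⦃x x' y y'⦄, x' ∈ f x → y' ∈ f y → (x' : ℤ) - x = (y' : ℤ) - y := by
    intro x x' y y' hx hy
    obtain ⟨z, hzdom, hz⟩ := hinf.exists_gt (x + x' + y + y')
    obtain ⟨z', hz'⟩ := (PFun.mem_dom f z).mp hzdom
    -- `z > x + x'` rules out `z' - x' = -(z - x)`, which would make `z'` negative; same for `y`
    have hx := abs_eq_abs.mp (hf hz' hx)
    have hy := abs_eq_abs.mp (hf hz' hy)
    omega
  obtain ⟨x₀, hx₀⟩ := hinf.nonempty
  obtain ⟨y₀, h₀⟩ := (PFun.mem_dom f x₀).mp hx₀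
  exact ⟨y₀ - x₀, fun x y h => by linarith [same h h₀]⟩

lemma eq_shift_comp_res_id {f : ℕ →. ℕ} {c : ℤ} (hc : ∀ ⦃x y⦄, y ∈ f x → (y : ℤ) = x + c) :
    f = (shift c).comp (PFun.res id f.Dom) := by
  refine PFun.ext fun a b => ?_
  simp only [PFun.mem_comp, PFun.mem_res, mem_shift, id_eq]
  constructor
  · intro hb
    exact ⟨a, ⟨(PFun.mem_dom f a).mpr ⟨b, hb⟩, rfl⟩, hc hb⟩
  · rintro ⟨_, ⟨ha, rfl⟩, hb⟩
    obtain ⟨b', hb'⟩ := (PFun.mem_dom f a).mp ha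
    rwa [show b = b' by have := hc hb'; omega]

/-- The set A = {α, β} ∪ {ε^{[k]} : k ≥ 2} generates the monoid IN∞ of cofinite partial
isometries of ℕ: every γ ∈ IN∞ is a finite product of elements of A. -/
theorem stmt_16 :
    ∀ f, CofIsoN f → Gen ({amap, bmap} ∪ {g | ∃ k : ℕ, 2 ≤ k ∧ g = eps k}) f := by
  rintro f ⟨hdom, -, -, hdist⟩
  have hinf : f.Dom.Infinite := by simpa using hdom.infinite_compl
  obtain ⟨c, hc⟩ := PreservesDist.exists_displacement hdist hinf
  rw [eq_shift_comp_res_id hc]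
  exact Gen.mul (gen_res_id hdom) (gen_shift c)
end

section
/- If A is any generating set of the monoid IN∞ of cofinite partial isometries of ℕ, then A contains at least two distinct elements of the bicyclic submonoid C_ℕ, namely an element with domain all of ℕ and an element with range all of ℕ (other than the identity). -/
namespace PFun

variable {α β γ : Type*}

theorem dom_eq_univ_of_comp {f : β →. γ} {g : α →. β} (h : (f.comp g).Dom = Set.univ) :
    g.Dom = Set.univ :=
  Set.eq_univ_of_univ_subset <| h ▸ (dom_comp f g).symm ▸ g.preimage_subset_dom f.Dom

theorem ran_eq_univ_of_comp {f : β →. γ} {g : α →. β} (h : (f.comp g).ran = Set.univ) :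
    f.ran = Set.univ := by
  refine Set.eq_univ_of_forall fun z => ?_
  obtain ⟨x, hx⟩ : z ∈ (f.comp g).ran := h ▸ Set.mem_univ z
  obtain ⟨y, -, hy⟩ := Part.mem_bind_iff.mp hx
  exact ⟨y, hy⟩

end PFun

namespace CofIsoN

variable {f : ℕ →. ℕ}

theorem exists_shift (h : CofIsoN f) : ∃ c : ℤ, ∀ ⦃x y⦄, y ∈ f x → (y : ℤ) = x + c := by
  obtain ⟨hdom, -, -, hiso⟩ := h
  have hinf : f.Dom.Infinite := by simpa using hdom.infinite_compl
  obtain ⟨x₀, hx₀⟩ := hinf.nonempty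
  refine ⟨((f x₀).get hx₀ : ℤ) - x₀, fun x y hxy => ?_⟩
  -- For a point `x₁` beyond `x₀`, `x` and their images, only one sign choice in each
  -- distance equation is consistent, and it forces equal shifts.
  obtain ⟨x₁, hx₁, hgt⟩ := hinf.exists_gt ((f x₀).get hx₀ + x₀ + y + x)
  have h₀ := abs_eq_abs.mp (hiso (Part.get_mem hx₁) (Part.get_mem hx₀))
  have h₁ := abs_eq_abs.mp (hiso (Part.get_mem hx₁) hxy)
  omega

theorem of_shift (c : ℤ) (hc : ∀ ⦃x y⦄, y ∈ f x → (y : ℤ) = x + c)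
    (hdom : f.Domᶜ.Finite) (hran : f.ranᶜ.Finite) : CofIsoN f := by
  refine ⟨hdom, hran, fun x y x' y' hx hy hxy => ?_, fun x y x' y' hx hy => ?_⟩
  · have := hc hx
    have := hc hy
    omega
  · rw [hc hx, hc hy, add_sub_add_right_eq_sub]

theorem eq_id (h : CofIsoN f) (hdom : f.Dom = Set.univ) (hran : f.ran = Set.univ) :
    f = PFun.id ℕ := by
  obtain ⟨c, hc⟩ := h.exists_shift
  obtain ⟨y, hy⟩ := (f.mem_dom 0).mp (hdom ▸ Set.mem_univ 0)
  obtain ⟨x, hx⟩ : 0 ∈ f.ran := hran ▸ Set.mem_univ 0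
  have hc₀ : c = 0 := by
    have := hc hy
    have := hc hx
    omega
  refine PFun.ext fun a b => ⟨fun hb => ?_, fun hb => ?_⟩
  · have := hc hb
    exact Part.mem_some_iff.mpr (by omega)
  · obtain ⟨b', hb'⟩ := (f.mem_dom a).mp (hdom ▸ Set.mem_univ a)
    have := hc hb'
    obtain rfl : b = a := Part.mem_some_iff.mp hb
    obtain rfl : b' = b := by omega
    exact hb'

theorem dom_eq_of_ran_eq_univ (h : CofIsoN f) (hran : f.ran = Set.univ) :
    ∃ m : ℕ, f.Dom = {n | m ≤ n} := by
  obtain ⟨c, hc⟩ := h.exists_shift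
  obtain ⟨m, hm⟩ : 0 ∈ f.ran := hran ▸ Set.mem_univ 0
  have hcm : c = -(m : ℤ) := by
    have := hc hm
    omega
  refine ⟨m, Set.ext fun x => ⟨fun hx => ?_, fun hx => ?_⟩⟩
  · obtain ⟨y, hy⟩ := (f.mem_dom x).mp hx
    have := hc hy
    simp only [Set.mem_ofPred_eq]
    omega
  · obtain ⟨z, hz⟩ : x - m ∈ f.ran := hran ▸ Set.mem_univ _
    have := hc hz
    obtain rfl : z = x := by
      simp only [Set.mem_ofPred_eq] at hx
      omega
    exact (f.mem_dom z).mpr ⟨_, hz⟩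

end CofIsoN

namespace Gen

variable {A : Set (ℕ →. ℕ)} {f : ℕ →. ℕ}

theorem exists_mem_dom_eq_univ (hf : Gen A f) (hdom : f.Dom = Set.univ)
    (hne : f ≠ PFun.id ℕ) : ∃ a ∈ A, a.Dom = Set.univ ∧ a ≠ PFun.id ℕ := by
  induction hf with
  | one => exact absurd rfl hne
  | mem h => exact ⟨_, h, hdom, hne⟩
  | @mul p q _ _ ihp ihq =>
    by_cases hp : p = PFun.id ℕ
    · subst hp
      rw [PFun.comp_id] at hdom hne
      exact ihq hdom hne
    · exact ihp (PFun.dom_eq_univ_of_comp hdom) hp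

theorem exists_mem_ran_eq_univ (hf : Gen A f) (hran : f.ran = Set.univ)
    (hne : f ≠ PFun.id ℕ) : ∃ b ∈ A, b.ran = Set.univ ∧ b ≠ PFun.id ℕ := by
  induction hf with
  | one => exact absurd rfl hne
  | mem h => exact ⟨_, h, hran, hne⟩
  | @mul p q _ _ ihp ihq =>
    by_cases hq : q = PFun.id ℕ
    · subst hq
      rw [PFun.id_comp] at hran hne
      exact ihp hran hne
    · exact ihq (PFun.ran_eq_univ_of_comp hran) hq

end Gen

theorem cofIsoN_succ : CofIsoN (fun n : ℕ => n + 1 : ℕ → ℕ) := by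
  refine .of_shift 1 (fun x y hy => ?_) (by simp) ((Set.finite_singleton 0).subset fun y hy => ?_)
  · obtain rfl := Part.mem_some_iff.mp hy
    push_cast
    rfl
  · by_contra h0
    exact hy ⟨y - 1, Part.mem_some_iff.mpr (show y = y - 1 + 1 by simp at h0; omega)⟩

theorem ran_res_pred : (PFun.res (· - 1) {n : ℕ | 1 ≤ n}).ran = Set.univ :=
  Set.eq_univ_of_forall fun y => ⟨y + 1, (PFun.mem_res _ _ _ _).mpr ⟨by simp, by simp⟩⟩

theorem cofIsoN_pred : CofIsoN (PFun.res (· - 1) {n : ℕ | 1 ≤ n}) := by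
  refine .of_shift (-1) (fun x y hy => ?_) ((Set.finite_singleton 0).subset fun x hx => ?_)
    (by simp [ran_res_pred])
  · obtain ⟨hx, rfl⟩ := (PFun.mem_res _ _ _ _).mp hy
    simp only [Set.mem_ofPred_eq] at hx
    omega
  · by_contra h0
    have hx₁ : 1 ≤ x := by simp at h0; omega
    exact hx ((PFun.mem_dom _ _).mpr ⟨x - 1, (PFun.mem_res _ _ _ _).mpr ⟨hx₁, rfl⟩⟩)

/-- If A generates the monoid IN∞ of cofinite partial isometries of ℕ, then A contains
two distinct non-identity elements of the bicyclic submonoid C_ℕ (the elements of IN∞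
whose domain is an interval [m,∞)): one with domain all of ℕ and one with range all
of ℕ. -/
theorem stmt_18 (A : Set (ℕ →. ℕ)) (hA : A ⊆ {f | CofIsoN f})
    (hgen : ∀ f, CofIsoN f → Gen A f) :
    ∃ a ∈ A, ∃ b ∈ A, a ≠ b ∧
      (∃ m : ℕ, a.Dom = {n | m ≤ n}) ∧ (∃ m : ℕ, b.Dom = {n | m ≤ n}) ∧
      a ≠ PFun.id ℕ ∧ b ≠ PFun.id ℕ ∧
      a.Dom = Set.univ ∧ b.ran = Set.univ := by
  have succ_ne_id : ((fun n : ℕ => n + 1 : ℕ → ℕ) : ℕ →. ℕ) ≠ PFun.id ℕ := fun h => by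
    simpa using congrFun h 0
  have pred_ne_id : PFun.res (· - 1) {n : ℕ | 1 ≤ n} ≠ PFun.id ℕ := fun h => by
    simpa [PFun.mem_res] using (h ▸ Part.mem_some 0 : 0 ∈ PFun.res (· - 1) {n : ℕ | 1 ≤ n} 0)
  obtain ⟨a, haA, hadom, hane⟩ :=
    (hgen _ cofIsoN_succ).exists_mem_dom_eq_univ (PFun.dom_coe _) succ_ne_id
  obtain ⟨b, hbA, hbran, hbne⟩ :=
    (hgen _ cofIsoN_pred).exists_mem_ran_eq_univ ran_res_pred pred_ne_id
  refine ⟨a, haA, b, hbA, ?_, ⟨0, by simp [hadom]⟩, (hA hbA).dom_eq_of_ran_eq_univ hbran,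
    hane, hbne, hadom, hbran⟩
  rintro rfl
  exact hane ((hA haA).eq_id hadom hbran)
end
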